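/- Let G_uu, G_uv, G_vv : ℝ² → ℝ be continuously differentiable with g := G_uu·G_vv − G_uv² > 0 everywhere, and let F¹, F² : ℝ² → ℝ be continuously differentiable with (1/√g)(∂_u(√g F¹) + ∂_v(√g F²)) = 0 and (1/√g)(∂_u(G_uv F¹ + G_vv F²) − ∂_v(G_uu F¹ + G_uv F²)) = 0 everywhere. Then the components H¹ := (−G_uv F¹ − G_vv F²)/√g, H² := (G_uu F¹ + G_uv F²)/√g also satisfy (1/√g)(∂_u(√g H¹) + ∂_v(√g H²)) = 0 and (1/√g)(∂_u(G_uv H¹ + G_vv H²) − ∂_v(G_uu H¹ + G_uv H²)) = 0. -/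

import Mathlib

/-!
The rotation `F ↦ n × F` swaps the roles of the two operators. Writing `F♭ = (G_uu F¹ + G_uv F²,
G_uv F¹ + G_vv F²)` for the covariant components, one has `√g H = (-F♭₂, F♭₁)`, and, using
`G_uu G_vv - G_uv² = g`, the covariant components of `H` are `H♭ = (-√g F², √g F¹)`. Hence,
pointwise, `Div H = -Curl F` and `Curl H = Div F`.
-/

/-- Partial derivative with respect to the first coordinate `u`. -/
noncomputable def pdu (f : ℝ × ℝ → ℝ) (p : ℝ × ℝ) : ℝ := fderiv ℝ f p (1, 0)

/-- Partial derivative with respect to the second coordinate `v`. -/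
noncomputable def pdv (f : ℝ × ℝ → ℝ) (p : ℝ × ℝ) : ℝ := fderiv ℝ f p (0, 1)

theorem pdu_neg (f : ℝ × ℝ → ℝ) (p : ℝ × ℝ) : pdu (fun q => -f q) p = -pdu f p := by
  simp [pdu]

theorem pdv_neg (f : ℝ × ℝ → ℝ) (p : ℝ × ℝ) : pdv (fun q => -f q) p = -pdv f p := by
  simp [pdv]

section RotationAlgebra

variable {a b c s : ℝ} (f₁ f₂ : ℝ)

theorem mul_rotate_fst (hs : s ≠ 0) : s * ((-b * f₁ - c * f₂) / s) = -(b * f₁ + c * f₂) := by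
  rw [mul_div_cancel₀ _ hs]; ring

theorem mul_rotate_snd (hs : s ≠ 0) : s * ((a * f₁ + b * f₂) / s) = a * f₁ + b * f₂ :=
  mul_div_cancel₀ _ hs

theorem lower_rotate_snd (hs : s ≠ 0) (hsq : s * s = a * c - b ^ 2) :
    b * ((-b * f₁ - c * f₂) / s) + c * ((a * f₁ + b * f₂) / s) = s * f₁ := by
  field_simp
  linear_combination (-f₁) * hsq

theorem lower_rotate_fst (hs : s ≠ 0) (hsq : s * s = a * c - b ^ 2) :
    a * ((-b * f₁ - c * f₂) / s) + b * ((a * f₁ + b * f₂) / s) = -(s * f₂) := by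
  field_simp
  linear_combination f₂ * hsq

end RotationAlgebra

theorem harmonic_closed_under_rotation_general
    (G_uu G_uv G_vv : ℝ × ℝ → ℝ)
    (g : ℝ × ℝ → ℝ) (hgdef : ∀ p, g p = G_uu p * G_vv p - (G_uv p) ^ 2)
    (hgpos : ∀ p, 0 < g p)
    (F1 F2 : ℝ × ℝ → ℝ)
    (hdiv : ∀ p : ℝ × ℝ,
      (1 / Real.sqrt (g p)) *
        (pdu (fun q => Real.sqrt (g q) * F1 q) p + pdv (fun q => Real.sqrt (g q) * F2 q) p) = 0)
    (hcurl : ∀ p : ℝ × ℝ,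
      (1 / Real.sqrt (g p)) *
        (pdu (fun q => G_uv q * F1 q + G_vv q * F2 q) p -
          pdv (fun q => G_uu q * F1 q + G_uv q * F2 q) p) = 0)
    (H1 H2 : ℝ × ℝ → ℝ)
    (hH1 : ∀ p, H1 p = (-(G_uv p) * F1 p - G_vv p * F2 p) / Real.sqrt (g p))
    (hH2 : ∀ p, H2 p = (G_uu p * F1 p + G_uv p * F2 p) / Real.sqrt (g p)) :
    (∀ p : ℝ × ℝ,
      (1 / Real.sqrt (g p)) *
        (pdu (fun q => Real.sqrt (g q) * H1 q) p + pdv (fun q => Real.sqrt (g q) * H2 q) p) = 0)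
    ∧
    (∀ p : ℝ × ℝ,
      (1 / Real.sqrt (g p)) *
        (pdu (fun q => G_uv q * H1 q + G_vv q * H2 q) p -
          pdv (fun q => G_uu q * H1 q + G_uv q * H2 q) p) = 0) := by
  have hs (q : ℝ × ℝ) : Real.sqrt (g q) ≠ 0 := (Real.sqrt_pos.mpr (hgpos q)).ne'
  have hsq (q : ℝ × ℝ) : Real.sqrt (g q) * Real.sqrt (g q) = G_uu q * G_vv q - G_uv q ^ 2 := by
    rw [Real.mul_self_sqrt (hgpos q).le, hgdef]
  have sqrt_mul_H1 : (fun q => Real.sqrt (g q) * H1 q) =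
      fun q => -(G_uv q * F1 q + G_vv q * F2 q) := by
    funext q; rw [hH1]; exact mul_rotate_fst _ _ (hs q)
  have sqrt_mul_H2 : (fun q => Real.sqrt (g q) * H2 q) =
      fun q => G_uu q * F1 q + G_uv q * F2 q := by
    funext q; rw [hH2]; exact mul_rotate_snd _ _ (hs q)
  have lower_H_fst : (fun q => G_uu q * H1 q + G_uv q * H2 q) =
      fun q => -(Real.sqrt (g q) * F2 q) := by
    funext q; rw [hH1, hH2]; exact lower_rotate_fst _ _ (hs q) (hsq q)
  have lower_H_snd : (fun q => G_uv q * H1 q + G_vv q * H2 q) =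
      fun q => Real.sqrt (g q) * F1 q := by
    funext q; rw [hH1, hH2]; exact lower_rotate_snd _ _ (hs q) (hsq q)
  refine ⟨fun p => ?_, fun p => ?_⟩
  · rw [sqrt_mul_H1, sqrt_mul_H2, pdu_neg]
    linear_combination -hcurl p
  · rw [lower_H_snd, lower_H_fst, pdv_neg]
    linear_combination hdiv p

/-- If a tangential field `F` is harmonic (surface divergence-free and surface curl-free),
then so is the rotated field `n × F`. -/
theorem harmonic_closed_under_rotation
    (G_uu G_uv G_vv : ℝ × ℝ → ℝ)
    (hGuu : ContDiff ℝ 1 G_uu) (hGuv : ContDiff ℝ 1 G_uv) (hGvv : ContDiff ℝ 1 G_vv)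
    (g : ℝ × ℝ → ℝ) (hgdef : ∀ p, g p = G_uu p * G_vv p - (G_uv p) ^ 2)
    (hgpos : ∀ p, 0 < g p)
    (F1 F2 : ℝ × ℝ → ℝ) (hF1 : ContDiff ℝ 1 F1) (hF2 : ContDiff ℝ 1 F2)
    (hdiv : ∀ p : ℝ × ℝ,
      (1 / Real.sqrt (g p)) *
        (pdu (fun q => Real.sqrt (g q) * F1 q) p + pdv (fun q => Real.sqrt (g q) * F2 q) p) = 0)
    (hcurl : ∀ p : ℝ × ℝ,
      (1 / Real.sqrt (g p)) *
        (pdu (fun q => G_uv q * F1 q + G_vv q * F2 q) p -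
          pdv (fun q => G_uu q * F1 q + G_uv q * F2 q) p) = 0)
    (H1 H2 : ℝ × ℝ → ℝ)
    (hH1 : ∀ p, H1 p = (-(G_uv p) * F1 p - G_vv p * F2 p) / Real.sqrt (g p))
    (hH2 : ∀ p, H2 p = (G_uu p * F1 p + G_uv p * F2 p) / Real.sqrt (g p)) :
    (∀ p : ℝ × ℝ,
      (1 / Real.sqrt (g p)) *
        (pdu (fun q => Real.sqrt (g q) * H1 q) p + pdv (fun q => Real.sqrt (g q) * H2 q) p) = 0)
    ∧
    (∀ p : ℝ × ℝ,
      (1 / Real.sqrt (g p)) *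
        (pdu (fun q => G_uv q * H1 q + G_vv q * H2 q) p -
          pdv (fun q => G_uu q * H1 q + G_uv q * H2 q) p) = 0) :=
  harmonic_closed_under_rotation_general G_uu G_uv G_vv g hgdef hgpos F1 F2 hdiv hcurl H1 H2 hH1 hH2
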